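/- Key Lemma: every parallel reduction step can be sequentialized: if M ⇒ M', then there exist terms L and N such that M head-β_v-reduces (several steps) to L, L head-σ-reduces (several steps) to N, and N ⇛ⁱ M'. -/

import Mathlib

/-- Terms of the call-by-value λ-calculus, in de Bruijn notation. -/
inductive Term : Type
  | var : ℕ → Term
  | lam : Term → Term
  | app : Term → Term → Term

namespace Term

/-- Values are variables and abstractions. -/
def isValue : Term → Prop
  | var _ => True
  | lam _ => True
  | app _ _ => False

/-- Shift free de Bruijn indices ≥ d by one. -/
def lift (d : ℕ) : Term → Term
  | var n => if n < d then var n else var (n+1)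
  | lam M => lam (lift (d+1) M)
  | app M N => app (lift d M) (lift d N)

/-- Capture-avoiding substitution of `V` for index `k`. -/
def subst : Term → ℕ → Term → Term
  | var n, k, V => if n = k then V else if k < n then var (n-1) else var n
  | lam M, k, V => lam (subst M (k+1) (lift 0 V))
  | app M N, k, V => app (subst M k V) (subst N k V)

/-- Apply a term to a list of arguments: `appList M [M₁,…,Mₘ] = M M₁ … Mₘ`. -/
def appList : Term → List Term → Term
  | M, [] => M
  | M, N :: Ns => appList (app M N) Ns

/-- Root σ-reduction rules σ₁ and σ₃ (freshness handled by lifting). -/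
inductive SigmaBase : Term → Term → Prop
  | sigma1 (M N L : Term) :
      SigmaBase (app (app (lam M) N) L) (app (lam (app M (lift 0 L))) N)
  | sigma3 (V L N : Term) : isValue V →
      SigmaBase (app V (app (lam L) N)) (app (lam (app (lift 0 V) L)) N)

/-- Root rules of v-reduction: β_v, σ₁ and σ₃. -/
inductive VBase : Term → Term → Prop
  | beta (M V : Term) : isValue V → VBase (app (lam M) V) (subst M 0 V)
  | sigma1 (M N L : Term) :
      VBase (app (app (lam M) N) L) (app (lam (app M (lift 0 L))) N)
  | sigma3 (V L N : Term) : isValue V →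
      VBase (app V (app (lam L) N)) (app (lam (app (lift 0 V) L)) N)

/-- Contextual closure of a root relation. -/
inductive Ctx (r : Term → Term → Prop) : Term → Term → Prop
  | base {M M'} : r M M' → Ctx r M M'
  | lam {M M'} : Ctx r M M' → Ctx r (lam M) (lam M')
  | appL {M M'} (N : Term) : Ctx r M M' → Ctx r (app M N) (app M' N)
  | appR (M : Term) {N N'} : Ctx r N N' → Ctx r (app M N) (app M N')

/-- σ-reduction: contextual closure of σ₁ ∪ σ₃. -/
def SigmaRed : Term → Term → Prop := Ctx SigmaBase

/-- v-reduction: contextual closure of β_v ∪ σ₁ ∪ σ₃. -/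
def Red : Term → Term → Prop := Ctx VBase

/-- Head β_v-reduction. -/
inductive HeadBeta : Term → Term → Prop
  | beta (M V : Term) (Ms : List Term) : isValue V →
      HeadBeta (appList (app (lam M) V) Ms) (appList (subst M 0 V) Ms)
  | right (V : Term) {N N'} (Ms : List Term) : isValue V → HeadBeta N N' →
      HeadBeta (appList (app V N) Ms) (appList (app V N') Ms)

/-- Head σ-reduction. -/
inductive HeadSigma : Term → Term → Prop
  | sigma1 (M N L : Term) (Ms : List Term) :
      HeadSigma (appList (app (app (lam M) N) L) Ms)
                (appList (app (lam (app M (lift 0 L))) N) Ms)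
  | sigma3 (V L N : Term) (Ms : List Term) : isValue V →
      HeadSigma (appList (app V (app (lam L) N)) Ms)
                (appList (app (lam (app (lift 0 V) L)) N) Ms)
  | right (V : Term) {N N'} (Ms : List Term) : isValue V → HeadSigma N N' →
      HeadSigma (appList (app V N) Ms) (appList (app V N') Ms)

/-- Head v-reduction: head β_v ∪ head σ. -/
def HeadRed (M N : Term) : Prop := HeadBeta M N ∨ HeadSigma M N

/-- Internal v-reduction: v-steps that are not head v-steps. -/
def IntRed (M N : Term) : Prop := Red M N ∧ ¬ HeadRed M N

/-- Parallel reduction of the shuffling calculus λ_v^σ. -/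
inductive Par : Term → Term → Prop
  | var (x : ℕ) {Ms Ms' : List Term} : List.Forall₂ Par Ms Ms' →
      Par (appList (var x) Ms) (appList (var x) Ms')
  | lam {M M'} {Ms Ms' : List Term} : Par M M' → List.Forall₂ Par Ms Ms' →
      Par (appList (lam M) Ms) (appList (lam M') Ms')
  | beta {M M' V V'} {Ms Ms' : List Term} : isValue V → isValue V' →
      Par M M' → Par V V' → List.Forall₂ Par Ms Ms' →
      Par (appList (app (lam M) V) Ms) (appList (subst M' 0 V') Ms')
  | sigma1 {M M' N N' L L'} {Ms Ms' : List Term} :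
      Par M M' → Par N N' → Par L L' → List.Forall₂ Par Ms Ms' →
      Par (appList (app (app (lam M) N) L) Ms)
          (appList (app (lam (app M' (lift 0 L'))) N') Ms')
  | sigma3 {V V' L L' N N'} {Ms Ms' : List Term} : isValue V → isValue V' →
      Par V V' → Par L L' → Par N N' → List.Forall₂ Par Ms Ms' →
      Par (appList (app V (app (lam L) N)) Ms)
          (appList (app (lam (app (lift 0 V') L')) N') Ms')

/-- Internal parallel reduction. -/
inductive IPar : Term → Term → Prop
  | lam {N N'} : Par N N' → IPar (lam N) (lam N')
  | var (x : ℕ) : IPar (var x) (var x)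
  | right {V V' N N'} {Ms Ms' : List Term} : isValue V → isValue V' →
      Par V V' → IPar N N' → List.Forall₂ Par Ms Ms' →
      IPar (appList (app V N) Ms) (appList (app V' N') Ms')

/-- One-hole contexts. -/
inductive Ctx1 : Type
  | hole : Ctx1
  | lam : Ctx1 → Ctx1
  | appL : Ctx1 → Term → Ctx1
  | appR : Term → Ctx1 → Ctx1

/-- Capture-allowing hole filling. -/
def fill : Ctx1 → Term → Term
  | .hole, M => M
  | .lam C, M => lam (fill C M)
  | .appL C N, M => app (fill C M) N
  | .appR N C, M => app N (fill C M)

/-- `M` halts: head β_v-reduction from `M` reaches a value. -/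
def Halts (M : Term) : Prop := ∃ V, isValue V ∧ Relation.ReflTransGen HeadBeta M V

end Term

/-! Takahashi's method, by induction on `M ⇒ M'`. The rules for `x` and `λ` are internal steps
already. A β_v-redex `(λM)V` head-β_v-reduces to `M[V]`, and a sequentialization of `M ⇒ M'`
survives substituting a value for the bound variable. In a σ-redex `(λM)N L` or `V((λL)N)` the
subterm `N` is in head position under a value, so its sequentialization runs there and the σ-step
is fired after it. Finally the arguments `M₁ … Mₘ` are absorbed: if the internal part is an
application they are carried along, and if it is a value the first argument is in head position
and is sequentialized in turn. -/

namespace Term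

open Relation

theorem appList_append (A : Term) (Ns Ms : List Term) :
    appList A (Ns ++ Ms) = appList (appList A Ns) Ms := by
  induction Ns generalizing A with
  | nil => rfl
  | cons N Ns ih => exact ih (app A N)

theorem appList_concat (A B : Term) (Ms : List Term) :
    appList A (Ms ++ [B]) = app (appList A Ms) B :=
  appList_append A Ms [B]

theorem lift_appList (d : ℕ) (A : Term) (Ms : List Term) :
    lift d (appList A Ms) = appList (lift d A) (Ms.map (lift d)) := by
  induction Ms generalizing A with
  | nil => rfl
  | cons N Ms ih => simp only [appList, List.map_cons, ih, lift]

theorem subst_appList (A : Term) (Ms : List Term) (k : ℕ) (V : Term) :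
    subst (appList A Ms) k V = appList (subst A k V) (Ms.map (subst · k V)) := by
  induction Ms generalizing A with
  | nil => rfl
  | cons N Ms ih => simp only [appList, List.map_cons, ih, subst]

theorem not_isValue_appList_app (A B : Term) (Ms : List Term) :
    ¬ isValue (appList (app A B) Ms) := by
  induction Ms generalizing A B with
  | nil => exact id
  | cons N Ms ih => exact ih (app A B) N

theorem lift_lift_of_le (M : Term) {d e : ℕ} (h : d ≤ e) :
    lift d (lift e M) = lift (e + 1) (lift d M) := by
  induction M generalizing d e with
  | var n => grind [lift]
  | lam M ih => simp only [lift, ih (Nat.succ_le_succ h)]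
  | app A B ihA ihB => simp only [lift, ihA h, ihB h]

theorem lift_subst_above (M : Term) {k d : ℕ} (V : Term) (h : k ≤ d) :
    lift d (subst M k V) = subst (lift (d + 1) M) k (lift d V) := by
  induction M generalizing k d V with
  | var n => grind [subst, lift]
  | lam M ih =>
    simp only [subst, lift, ih (lift 0 V) (Nat.succ_le_succ h), lift_lift_of_le V (Nat.zero_le d)]
  | app A B ihA ihB => simp only [subst, lift, ihA V h, ihB V h]

theorem lift_subst_below (M : Term) {d k : ℕ} (V : Term) (h : d ≤ k) :
    lift d (subst M k V) = subst (lift d M) (k + 1) (lift d V) := by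
  induction M generalizing d k V with
  | var n => grind [subst, lift]
  | lam M ih =>
    simp only [subst, lift, ih (lift 0 V) (Nat.succ_le_succ h), lift_lift_of_le V (Nat.zero_le d)]
  | app A B ihA ihB => simp only [subst, lift, ihA V h, ihB V h]

theorem subst_lift_self (M : Term) (k : ℕ) (X : Term) : subst (lift k M) k X = M := by
  induction M generalizing k X with
  | var n => grind [subst, lift]
  | lam M ih => simp only [lift, subst, ih]
  | app A B ihA ihB => simp only [lift, subst, ihA, ihB]

theorem subst_subst_of_le (M : Term) {k j : ℕ} (W V : Term) (h : k ≤ j) :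
    subst (subst M k W) j V = subst (subst M (j + 1) (lift k V)) k (subst W j V) := by
  induction M generalizing k j W V with
  | var n => grind [subst, lift, subst_lift_self]
  | lam M ih =>
    simp only [subst, ih (lift 0 W) (lift 0 V) (Nat.succ_le_succ h),
      lift_lift_of_le V (Nat.zero_le k), lift_subst_below W V (Nat.zero_le j)]
  | app A B ihA ihB => simp only [subst, ihA W V h, ihB W V h]

theorem isValue_lam (M : Term) : isValue (lam M) := trivial

theorem isValue.lift {V : Term} (h : isValue V) (d : ℕ) : isValue (lift d V) := by
  cases V with
  | var n => simp only [Term.lift]; split_ifs <;> trivial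
  | lam M => trivial
  | app A B => exact h.elim

theorem isValue.subst {W V : Term} (hW : isValue W) (hV : isValue V) (k : ℕ) :
    isValue (subst W k V) := by
  cases W with
  | var n => simp only [Term.subst]; split_ifs <;> first | exact hV | trivial
  | lam M => trivial
  | app A B => exact hW.elim

/-- `induction` does not accept the nested inductive `Par`; this principle is `Par.rec` with the
hypotheses for the arguments `M₁ … Mₘ` collected in a `List.Forall₂`. -/
theorem Par.induction {motive : Term → Term → Prop}
    (var : ∀ {x : ℕ} {Ms Ms' : List Term}, List.Forall₂ Par Ms Ms' →
      List.Forall₂ motive Ms Ms' → motive (appList (.var x) Ms) (appList (.var x) Ms'))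
    (lam : ∀ {M M'} {Ms Ms' : List Term}, Par M M' → List.Forall₂ Par Ms Ms' →
      motive M M' → List.Forall₂ motive Ms Ms' →
      motive (appList (.lam M) Ms) (appList (.lam M') Ms'))
    (beta : ∀ {M M' V V'} {Ms Ms' : List Term}, isValue V → isValue V' → Par M M' →
      Par V V' → List.Forall₂ Par Ms Ms' → motive M M' → motive V V' →
      List.Forall₂ motive Ms Ms' →
      motive (appList (app (.lam M) V) Ms) (appList (subst M' 0 V') Ms'))
    (sigma1 : ∀ {M M' N N' L L'} {Ms Ms' : List Term}, Par M M' → Par N N' → Par L L' →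
      List.Forall₂ Par Ms Ms' → motive M M' → motive N N' → motive L L' →
      List.Forall₂ motive Ms Ms' → motive (appList (app (app (.lam M) N) L) Ms)
        (appList (app (.lam (app M' (lift 0 L'))) N') Ms'))
    (sigma3 : ∀ {V V' L L' N N'} {Ms Ms' : List Term}, isValue V → isValue V' → Par V V' →
      Par L L' → Par N N' → List.Forall₂ Par Ms Ms' → motive V V' → motive L L' →
      motive N N' → List.Forall₂ motive Ms Ms' → motive (appList (app V (app (.lam L) N)) Ms)
        (appList (app (.lam (app (lift 0 V') L')) N') Ms'))
    {M M' : Term} (h : Par M M') : motive M M' :=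
  Par.rec (motive_2 := fun Ms Ms' _ => List.Forall₂ motive Ms Ms')
    (fun _ => var) lam beta sigma1 sigma3 .nil (fun _ _ ih ihs => .cons ih ihs) h

theorem Par.app {A A' B B' : Term} (hA : Par A A') (hB : Par B B') :
    Par (app A B) (app A' B') := by
  have hArgs {Ms Ms' : List Term} (hMs : List.Forall₂ Par Ms Ms') :
      List.Forall₂ Par (Ms ++ [B]) (Ms' ++ [B']) :=
    List.rel_append hMs (.cons hB .nil)
  cases hA with
  | var x hMs =>
    rw [← appList_concat, ← appList_concat]; exact .var x (hArgs hMs)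
  | lam hM hMs =>
    rw [← appList_concat, ← appList_concat]; exact .lam hM (hArgs hMs)
  | beta hV hV' hM hVV hMs =>
    rw [← appList_concat, ← appList_concat]; exact .beta hV hV' hM hVV (hArgs hMs)
  | sigma1 hM hN hL hMs =>
    rw [← appList_concat, ← appList_concat]; exact .sigma1 hM hN hL (hArgs hMs)
  | sigma3 hV hV' hVV hL hN hMs =>
    rw [← appList_concat, ← appList_concat]; exact .sigma3 hV hV' hVV hL hN (hArgs hMs)

theorem Par.appList {A A' : Term} {Ms Ms' : List Term} (hA : Par A A')
    (hMs : List.Forall₂ Par Ms Ms') : Par (appList A Ms) (appList A' Ms') := by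
  induction hMs generalizing A A' with
  | nil => exact hA
  | cons hN _ ih => exact ih (hA.app hN)

theorem Par.lift {M M' : Term} (h : Par M M') (d : ℕ) : Par (lift d M) (lift d M') := by
  refine Par.induction (motive := fun M M' => ∀ d, Par (Term.lift d M) (Term.lift d M'))
    (fun _ ih d => ?_) (fun _ _ ihM ih d => ?_) (fun hV hV' _ _ _ ihM ihV ih d => ?_)
    (fun _ _ _ _ ihM ihN ihL ih d => ?_) (fun hV hV' _ _ _ _ ihV ihL ihN ih d => ?_) h d
  all_goals
    have hArgs := List.rel_map (fun _ _ h => h d) ih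
    rw [lift_appList, lift_appList]
  · simp only [Term.lift]
    split_ifs <;> exact .var _ hArgs
  · exact .lam (ihM (d + 1)) hArgs
  · rw [lift_subst_above _ _ (Nat.zero_le d)]
    exact .beta (hV.lift d) (hV'.lift d) (ihM (d + 1)) (ihV d) hArgs
  · simp only [Term.lift]
    rw [← lift_lift_of_le _ (Nat.zero_le d)]
    exact .sigma1 (ihM (d + 1)) (ihN d) (ihL d) hArgs
  · simp only [Term.lift]
    rw [← lift_lift_of_le _ (Nat.zero_le d)]
    exact .sigma3 (hV.lift d) (hV'.lift d) (ihV d) (ihL (d + 1)) (ihN d) hArgs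

theorem Par.subst {M M' V V' : Term} (h : Par M M') (hV : isValue V) (hV' : isValue V')
    (hVV : Par V V') (k : ℕ) : Par (subst M k V) (subst M' k V') := by
  refine Par.induction
    (motive := fun M M' => ∀ V V', isValue V → isValue V' → Par V V' → ∀ k,
      Par (Term.subst M k V) (Term.subst M' k V'))
    (fun _ ih _ _ hV hV' hVV k => ?_) (fun _ _ ihM ih _ _ hV hV' hVV k => ?_)
    (fun hW hW' _ _ _ ihM ihW ih _ _ hV hV' hVV k => ?_)
    (fun _ _ _ _ ihM ihN ihL ih _ _ hV hV' hVV k => ?_)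
    (fun hW hW' _ _ _ _ ihW ihL ihN ih _ _ hV hV' hVV k => ?_) h V V' hV hV' hVV k
  all_goals
    have hArgs := List.rel_map (fun _ _ h => h _ _ hV hV' hVV k) ih
    have hVV₀ := hVV.lift 0
    rw [subst_appList, subst_appList]
  · refine .appList ?_ hArgs
    simp only [Term.subst]
    split_ifs
    · exact hVV
    all_goals exact .var _ .nil
  · exact .lam (ihM _ _ (hV.lift 0) (hV'.lift 0) hVV₀ (k + 1)) hArgs
  · rw [subst_subst_of_le _ _ _ (Nat.zero_le k)]
    exact .beta (hW.subst hV k) (hW'.subst hV' k)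
      (ihM _ _ (hV.lift 0) (hV'.lift 0) hVV₀ (k + 1)) (ihW _ _ hV hV' hVV k) hArgs
  · simp only [Term.subst]
    rw [← lift_subst_below _ _ (Nat.zero_le k)]
    exact .sigma1 (ihM _ _ (hV.lift 0) (hV'.lift 0) hVV₀ (k + 1)) (ihN _ _ hV hV' hVV k)
      (ihL _ _ hV hV' hVV k) hArgs
  · simp only [Term.subst]
    rw [← lift_subst_below _ _ (Nat.zero_le k)]
    exact .sigma3 (hW.subst hV k) (hW'.subst hV' k) (ihW _ _ hV hV' hVV k)
      (ihL _ _ (hV.lift 0) (hV'.lift 0) hVV₀ (k + 1)) (ihN _ _ hV hV' hVV k) hArgs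

theorem IPar.of_par_of_isValue {V V' : Term} (hV : isValue V) (h : Par V V') : IPar V V' := by
  cases h with
  | var x hMs =>
    cases hMs with
    | nil => exact .var x
    | cons => exact absurd hV (not_isValue_appList_app _ _ _)
  | lam hM hMs =>
    cases hMs with
    | nil => exact .lam hM
    | cons => exact absurd hV (not_isValue_appList_app _ _ _)
  | beta | sigma1 | sigma3 => exact absurd hV (not_isValue_appList_app _ _ _)

theorem IPar.subst {N N' V V' : Term} (h : IPar N N') (hV : isValue V) (hV' : isValue V')
    (hVV : Par V V') (k : ℕ) : IPar (subst N k V) (subst N' k V') := by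
  induction h generalizing k with
  | lam hN => exact .lam (hN.subst (hV.lift 0) (hV'.lift 0) (hVV.lift 0) (k + 1))
  | var x =>
    simp only [Term.subst]
    split_ifs
    · exact .of_par_of_isValue hV hVV
    all_goals exact .var _
  | right hW hW' hWW _ hMs ih =>
    rw [subst_appList, subst_appList]
    exact .right (hW.subst hV k) (hW'.subst hV' k) (hWW.subst hV hV' hVV k) (ih k)
      (List.rel_map (fun _ _ h => h.subst hV hV' hVV k) hMs)

theorem HeadBeta.appList {A B : Term} (h : HeadBeta A B) (Ms : List Term) :
    HeadBeta (appList A Ms) (appList B Ms) := by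
  cases h with
  | beta M V Ns hV =>
    rw [← appList_append, ← appList_append]
    exact .beta M V (Ns ++ Ms) hV
  | right V Ns hV hN =>
    rw [← appList_append, ← appList_append]
    exact .right V (Ns ++ Ms) hV hN

theorem HeadSigma.appList {A B : Term} (h : HeadSigma A B) (Ms : List Term) :
    HeadSigma (appList A Ms) (appList B Ms) := by
  cases h with
  | sigma1 M N L Ns =>
    rw [← appList_append, ← appList_append]
    exact .sigma1 M N L (Ns ++ Ms)
  | sigma3 V L N Ns hV =>
    rw [← appList_append, ← appList_append]
    exact .sigma3 V L N (Ns ++ Ms) hV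
  | right V Ns hV hN =>
    rw [← appList_append, ← appList_append]
    exact .right V (Ns ++ Ms) hV hN

theorem HeadBeta.subst {A B V : Term} (h : HeadBeta A B) (hV : isValue V) (k : ℕ) :
    HeadBeta (subst A k V) (subst B k V) := by
  induction h with
  | beta M W _ hW =>
    rw [subst_appList, subst_appList, subst_subst_of_le M W V (Nat.zero_le k)]
    exact .beta _ _ _ (hW.subst hV k)
  | right _ _ hW _ ih =>
    rw [subst_appList, subst_appList]
    exact .right _ _ (hW.subst hV k) ih

theorem HeadSigma.subst {A B V : Term} (h : HeadSigma A B) (hV : isValue V) (k : ℕ) :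
    HeadSigma (subst A k V) (subst B k V) := by
  induction h with
  | sigma1 _ _ L =>
    rw [subst_appList, subst_appList]
    simp only [Term.subst]
    rw [← lift_subst_below L V (Nat.zero_le k)]
    exact .sigma1 _ _ _ _
  | sigma3 W _ _ _ hW =>
    rw [subst_appList, subst_appList]
    simp only [Term.subst]
    rw [← lift_subst_below W V (Nat.zero_le k)]
    exact .sigma3 _ _ _ _ (hW.subst hV k)
  | right _ _ hW _ ih =>
    rw [subst_appList, subst_appList]
    exact .right _ _ (hW.subst hV k) ih

theorem HeadSigma.not_isValue {A B : Term} (h : HeadSigma A B) : ¬ isValue B := by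
  cases h <;> exact not_isValue_appList_app _ _ _

theorem reflTransGen_headSigma_eq_of_isValue {A B : Term} (h : ReflTransGen HeadSigma A B)
    (hB : isValue B) : A = B := by
  cases h with
  | refl => rfl
  | tail _ hs => exact absurd hB hs.not_isValue

theorem reflTransGen_headBeta_appList_app {V N N' : Term} (hV : isValue V) (Ms : List Term)
    (h : ReflTransGen HeadBeta N N') :
    ReflTransGen HeadBeta (appList (app V N) Ms) (appList (app V N') Ms) :=
  ReflTransGen.lift (fun X => appList (app V X) Ms) (fun _ _ => HeadBeta.right V Ms hV) _ _ h

theorem reflTransGen_headSigma_appList_app {V N N' : Term} (hV : isValue V) (Ms : List Term)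
    (h : ReflTransGen HeadSigma N N') :
    ReflTransGen HeadSigma (appList (app V N) Ms) (appList (app V N') Ms) :=
  ReflTransGen.lift (fun X => appList (app V X) Ms) (fun _ _ => HeadSigma.right V Ms hV) _ _ h

def Sequentialized (M M' : Term) : Prop :=
  ∃ L N, ReflTransGen HeadBeta M L ∧ ReflTransGen HeadSigma L N ∧ IPar N M'

namespace Sequentialized

theorem of_iPar {M M' : Term} (h : IPar M M') : Sequentialized M M' :=
  ⟨M, M, .refl, .refl, h⟩

theorem of_reflTransGen_headBeta {M L M' : Term} (hML : ReflTransGen HeadBeta M L)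
    (h : Sequentialized L M') : Sequentialized M M' :=
  let ⟨L', N, hβ, hσ, hI⟩ := h
  ⟨L', N, hML.trans hβ, hσ, hI⟩

theorem subst {M M' V V' : Term} (h : Sequentialized M M') (hV : isValue V) (hV' : isValue V')
    (hVV : Par V V') (k : ℕ) : Sequentialized (subst M k V) (subst M' k V') :=
  let ⟨_, _, hβ, hσ, hI⟩ := h
  ⟨_, _, ReflTransGen.lift (Term.subst · k V) (fun _ _ h => h.subst hV k) _ _ hβ,
    ReflTransGen.lift (Term.subst · k V) (fun _ _ h => h.subst hV k) _ _ hσ,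
    hI.subst hV hV' hVV k⟩

theorem appList_app {V V' N N' : Term} {Ms Ms' : List Term} (hV : isValue V)
    (hV' : isValue V') (hVV : Par V V') (hN : Sequentialized N N')
    (hMs : List.Forall₂ Par Ms Ms') :
    Sequentialized (appList (app V N) Ms) (appList (app V' N') Ms') :=
  let ⟨_, _, hβ, hσ, hI⟩ := hN
  ⟨_, _, reflTransGen_headBeta_appList_app hV Ms hβ,
    reflTransGen_headSigma_appList_app hV Ms hσ, .right hV hV' hVV hI hMs⟩

theorem sigma1 {M M' N N' L L' : Term} (hM : Par M M') (hN : Sequentialized N N')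
    (hL : Par L L') :
    Sequentialized (app (app (lam M) N) L) (app (lam (app M' (lift 0 L'))) N') :=
  let ⟨_, K, hβ, hσ, hI⟩ := hN
  ⟨_, _, reflTransGen_headBeta_appList_app (isValue_lam M) [L] hβ,
    (reflTransGen_headSigma_appList_app (isValue_lam M) [L] hσ).tail (HeadSigma.sigma1 M K L []),
    IPar.right (isValue_lam _) (isValue_lam _) (.lam (hM.app (hL.lift 0)) .nil) hI .nil⟩

theorem sigma3 {V V' L L' N N' : Term} (hV : isValue V) (hVV : Par V V') (hL : Par L L')
    (hN : Sequentialized N N') :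
    Sequentialized (app V (app (lam L) N)) (app (lam (app (lift 0 V') L')) N') :=
  let ⟨_, K, hβ, hσ, hI⟩ := hN
  ⟨_, _, reflTransGen_headBeta_appList_app hV []
      (reflTransGen_headBeta_appList_app (isValue_lam L) [] hβ),
    (reflTransGen_headSigma_appList_app hV []
      (reflTransGen_headSigma_appList_app (isValue_lam L) [] hσ)).tail
      (HeadSigma.sigma3 V L K [] hV),
    IPar.right (isValue_lam _) (isValue_lam _) (.lam ((hVV.lift 0).app hL) .nil) hI .nil⟩

theorem appList {A A' : Term} {Ms Ms' : List Term} (hA : Sequentialized A A')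
    (hMs : List.Forall₂ Par Ms Ms') (ih : List.Forall₂ Sequentialized Ms Ms') :
    Sequentialized (appList A Ms) (appList A' Ms') := by
  cases hMs with
  | nil => exact hA
  | @cons P P' Ns Ns' hPP hNs =>
    obtain ⟨hP, -⟩ := List.forall₂_cons.1 ih
    obtain ⟨L, N, hβ, hσ, hI⟩ := hA
    refine of_reflTransGen_headBeta
      (ReflTransGen.lift (Term.appList · (P :: Ns)) (fun _ _ h => h.appList _) _ _ hβ) ?_
    cases hI with
    | @right V V' Q Q' Rs Rs' hV hV' hVV hQ hRs =>
      refine ⟨_, Term.appList (app V Q) (Rs ++ P :: Ns), .refl, ?_, ?_⟩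
      · rw [appList_append]
        exact ReflTransGen.lift (Term.appList · (P :: Ns)) (fun _ _ h => h.appList _) _ _ hσ
      · rw [← appList_append]
        exact .right hV hV' hVV hQ (List.rel_append hRs (.cons hPP hNs))
    | var x =>
      obtain rfl := reflTransGen_headSigma_eq_of_isValue hσ trivial
      exact hP.appList_app trivial trivial (.var x .nil) hNs
    | lam hQ =>
      obtain rfl := reflTransGen_headSigma_eq_of_isValue hσ trivial
      exact hP.appList_app trivial trivial (.lam hQ .nil) hNs

end Sequentialized

theorem Par.sequentialized {M M' : Term} (h : Par M M') : Sequentialized M M' :=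
  Par.induction (motive := Sequentialized)
    (fun hMs ih => (Sequentialized.of_iPar (.var _)).appList hMs ih)
    (fun hM hMs _ ih => (Sequentialized.of_iPar (.lam hM)).appList hMs ih)
    (fun hV hV' _ hVV hMs ihM _ ih =>
      ((ihM.subst hV hV' hVV 0).of_reflTransGen_headBeta (.single (.beta _ _ [] hV))).appList
        hMs ih)
    (fun hM _ hL hMs _ ihN _ ih => (ihN.sigma1 hM hL).appList hMs ih)
    (fun hV _ hVV hL _ hMs _ _ ihN ih => (ihN.sigma3 hV hVV hL).appList hMs ih) h

end Term

open Term Relation in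
theorem key_lemma {M M2 : Term} (h : Par M M2) :
    ∃ L N, ReflTransGen HeadBeta M L ∧ ReflTransGen HeadSigma L N ∧ IPar N M2 :=
  h.sequentialized
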